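/- Let W ⊆ ℝⁿ be compact convex with 0 ∈ W, and A Schur stable with induced norm γ = ‖A‖ < 1. Then the sequence E_N = ⨁_{i=0}^{N-1} AⁱW is a Cauchy sequence in the Hausdorff metric on nonempty compact subsets of ℝⁿ, and hence converges to a compact set E_∞. -/

import Mathlib

open Pointwise Metric Filter Topology

/-! Since `E_{N+1} = E_N + Aᴺ W` with `0 ∈ Aᴺ W ⊆ closedBall 0 (γᴺ C)`, where `W ⊆ closedBall 0 C`,
consecutive partial sums are within Hausdorff distance `C γᴺ`. The sequence is therefore Cauchy
in the complete space of nonempty compact subsets of `E`, and its limit is `E_∞`. -/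

theorem ContinuousLinearMap.norm_pow_apply_le {𝕜 E : Type*} [NontriviallyNormedField 𝕜]
    [SeminormedAddCommGroup E] [NormedSpace 𝕜 E] (f : E →L[𝕜] E) (n : ℕ) (x : E) :
    ‖(f ^ n) x‖ ≤ ‖f‖ ^ n * ‖x‖ := by
  induction n with
  | zero => simp
  | succ n ih =>
    calc ‖(f ^ (n + 1)) x‖ = ‖f ((f ^ n) x)‖ := by rw [pow_succ']; rfl
      _ ≤ ‖f‖ * (‖f‖ ^ n * ‖x‖) := f.le_of_opNorm_le_of_le le_rfl ih
      _ = ‖f‖ ^ (n + 1) * ‖x‖ := by ring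

theorem isCompact_finset_sum {ι E : Type*} [AddCommMonoid E] [TopologicalSpace E]
    [ContinuousAdd E] (s : Finset ι) {t : ι → Set E}
    (ht : ∀ i ∈ s, IsCompact (t i)) : IsCompact (∑ i ∈ s, t i) :=
  Finset.sum_induction t IsCompact (fun _ _ ha hb => ha.add hb) isCompact_singleton ht

theorem zero_mem_finset_sum {ι E : Type*} [AddCommMonoid E] (s : Finset ι) {t : ι → Set E}
    (ht : ∀ i ∈ s, (0 : E) ∈ t i) : (0 : E) ∈ ∑ i ∈ s, t i :=
  Finset.sum_induction t (0 ∈ ·) (fun _ _ ha hb => by simpa using Set.add_mem_add ha hb)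
    rfl ht

theorem hausdorffDist_self_add_le {E : Type*} [SeminormedAddCommGroup E] {s t : Set E} {r : ℝ}
    (h0 : (0 : E) ∈ t) (ht : ∀ y ∈ t, ‖y‖ ≤ r) : hausdorffDist s (s + t) ≤ r := by
  refine hausdorffDist_le_of_mem_dist ((norm_nonneg _).trans (ht 0 h0)) ?_ ?_
  · intro x hx
    exact ⟨x + 0, Set.add_mem_add hx h0, by simpa using (norm_nonneg _).trans (ht 0 h0)⟩
  · rintro _ ⟨x, hx, y, hy, rfl⟩
    exact ⟨x, hx, by simpa [dist_eq_norm] using ht y hy⟩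

theorem hausdorffDist_cauchy_and_tendsto_of_le_geometric {α : Type*} [MetricSpace α]
    [CompleteSpace α] (s : ℕ → Set α) (hs : ∀ n, IsCompact (s n)) (hne : ∀ n, (s n).Nonempty)
    {C r : ℝ} (hr : r < 1) (hd : ∀ n, hausdorffDist (s n) (s (n + 1)) ≤ C * r ^ n) :
    (∀ ε > (0 : ℝ), ∃ N₀ : ℕ, ∀ m n : ℕ, N₀ ≤ m → N₀ ≤ n → hausdorffDist (s m) (s n) < ε) ∧
    ∃ L : Set α, IsCompact L ∧ L.Nonempty ∧
      Tendsto (fun N => hausdorffDist (s N) L) atTop (𝓝 0) := by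
  let K : ℕ → TopologicalSpace.NonemptyCompacts α := fun n => ⟨⟨s n, hs n⟩, hne n⟩
  have hK : CauchySeq K := cauchySeq_of_le_geometric r C hr hd
  obtain ⟨L, hL⟩ := cauchySeq_tendsto_of_complete hK
  refine ⟨fun ε hε => ?_, L, L.isCompact, L.nonempty, tendsto_iff_dist_tendsto_zero.1 hL⟩
  obtain ⟨N₀, hN₀⟩ := Metric.cauchySeq_iff.1 hK ε hε
  exact ⟨N₀, fun m n hm hn => hN₀ m hm n hn⟩

theorem truncated_cauchy_and_converges_general
    {E : Type*} [NormedAddCommGroup E] [NormedSpace ℝ E] [FiniteDimensional ℝ E]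
    (A : E →L[ℝ] E) (γ : ℝ) (hγ : ‖A‖ = γ) (hγ1 : γ < 1)
    (W : Set E) (hW : IsCompact W) (h0W : (0 : E) ∈ W) :
    (∀ ε > (0 : ℝ), ∃ N₀ : ℕ, ∀ m n : ℕ, N₀ ≤ m → N₀ ≤ n →
        hausdorffDist (∑ i ∈ Finset.range m, (A ^ i) '' W)
          (∑ i ∈ Finset.range n, (A ^ i) '' W) < ε) ∧
    ∃ Einf : Set E, IsCompact Einf ∧ Einf.Nonempty ∧
      Tendsto (fun N => hausdorffDist (∑ i ∈ Finset.range N, (A ^ i) '' W) Einf)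
        atTop (𝓝 0) := by
  obtain ⟨C, hC⟩ := hW.isBounded.exists_norm_le
  have h0 (i : ℕ) : (0 : E) ∈ (A ^ i) '' W := ⟨0, h0W, map_zero _⟩
  refine hausdorffDist_cauchy_and_tendsto_of_le_geometric (C := C) _
    (fun n => isCompact_finset_sum _ fun i _ => hW.image (A ^ i).continuous)
    (fun n => ⟨0, zero_mem_finset_sum _ fun i _ => h0 i⟩) hγ1 fun n => ?_
  rw [Finset.sum_range_succ]
  refine hausdorffDist_self_add_le (h0 n) ?_
  rintro _ ⟨w, hw, rfl⟩
  calc ‖(A ^ n) w‖ ≤ γ ^ n * ‖w‖ := hγ ▸ A.norm_pow_apply_le n w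
    _ ≤ C * γ ^ n := by
      rw [mul_comm C]
      exact mul_le_mul_of_nonneg_left (hC w hw) (pow_nonneg (hγ ▸ norm_nonneg A) n)

/-- With `W` compact convex containing `0` and `‖A‖ = γ < 1`,
the truncated Minkowski sums `E_N = ⨁_{i=0}^{N-1} Aⁱ W` form a Cauchy sequence
in the Hausdorff metric and converge to a compact set `E_∞`. -/
theorem truncated_cauchy_and_converges
    {E : Type*} [NormedAddCommGroup E] [NormedSpace ℝ E] [FiniteDimensional ℝ E]
    (A : E →L[ℝ] E) (γ : ℝ) (hγ : ‖A‖ = γ) (hγ1 : γ < 1)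
    (W : Set E) (hW : IsCompact W) (hWc : Convex ℝ W) (h0W : (0 : E) ∈ W) :
    (∀ ε > (0 : ℝ), ∃ N₀ : ℕ, ∀ m n : ℕ, N₀ ≤ m → N₀ ≤ n →
        hausdorffDist (∑ i ∈ Finset.range m, (A ^ i) '' W)
          (∑ i ∈ Finset.range n, (A ^ i) '' W) < ε) ∧
    ∃ Einf : Set E, IsCompact Einf ∧ Einf.Nonempty ∧
      Tendsto (fun N => hausdorffDist (∑ i ∈ Finset.range N, (A ^ i) '' W) Einf)
        atTop (𝓝 0) :=
  truncated_cauchy_and_converges_general A γ hγ hγ1 W hW h0W
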